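/- arXiv:2305.13615 — 2 statements merged into one kernel-verified Lean document; each statement's English description precedes it below -/
import Mathlib

section
/- For all integers d1 ≥ 3 and d2 ≥ 5, the polynomial inequality d1(d2−2)(d1+d2)(d2−4)² > 2·d2²·(d1+d2−2)² holds if and only if both √(2(d1+d2−2)/(d1·(d2−4))) < 1 and C(d1,d2) < D(d1,d2) hold. -/
/-- Lower endpoint `C(d1,d2)`. -/
noncomputable def Cval (d1 d2 : ℕ) : ℝ :=
  (d1 : ℝ) / (d1 + d2 * (1 - Real.sqrt (2 * ((d1 : ℝ) + d2) / (d1 * ((d2 : ℝ) - 2))))⁻¹)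

/-- Lower endpoint `D(d1,d2)`. -/
noncomputable def Dval (d1 d2 : ℕ) : ℝ :=
  (d1 : ℝ) / (d1 + ((d2 : ℝ) - 2) *
    (1 - Real.sqrt (2 * ((d1 : ℝ) + d2 - 2) / (d1 * ((d2 : ℝ) - 4))))⁻¹)

/-!
Write `s = √(2(d1+d2)/(d1(d2-2)))` and `t = √(2(d1+d2-2)/(d1(d2-4)))`, so that `s ≤ t`.
When `t < 1`, clearing denominators turns `C < D` into `d2·t < (d2-2)·s + 2`, and squaring
twice turns that into the polynomial inequality. Conversely, the polynomial inequality gives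
`d2·t < (d2-2)·s + 2 ≤ (d2-2)·t + 2`, i.e. `t < 1`.
-/

open Real

lemma sqrt_lt_sqrt_add_iff {u v c : ℝ} (hu : 0 ≤ u) (hc : 0 < c) (huv : u + c ^ 2 ≤ v) :
    √v < √u + c ↔ (v - u - c ^ 2) ^ 2 < 4 * c ^ 2 * u := by
  have h2c : √(4 * c ^ 2 * u) = 2 * c * √u := by
    rw [show 4 * c ^ 2 * u = (2 * c) ^ 2 * u by ring, sqrt_mul (sq_nonneg _), sqrt_sq (by positivity)]
  rw [sqrt_lt' (by positivity), ← lt_sqrt (by linarith), h2c, add_sq, sq_sqrt hu]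
  constructor <;> intro h <;> linarith

lemma div_add_mul_inv_lt_div_add_mul_inv_iff {a p q s t : ℝ} (ha : 0 < a) (hp : 0 < p)
    (hq : 0 < q) (hs : s < 1) (ht : t < 1) :
    a / (a + p * (1 - s)⁻¹) < a / (a + q * (1 - t)⁻¹) ↔ q * (1 - s) < p * (1 - t) := by
  have hs' : 0 < 1 - s := by linarith
  have ht' : 0 < 1 - t := by linarith
  rw [div_lt_div_iff_of_pos_left ha (by positivity) (by positivity), add_lt_add_iff_left,
    ← div_eq_mul_inv, ← div_eq_mul_inv, div_lt_div_iff₀ ht' hs']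

lemma poly_lt_iff_mul_sqrt_lt (a b : ℝ) (ha : 0 < a) (hb : 4 < b) :
    2 * b ^ 2 * (a + b - 2) ^ 2 < a * (b - 2) * (a + b) * (b - 4) ^ 2 ↔
      b * √(2 * (a + b - 2) / (a * (b - 4))) < (b - 2) * √(2 * (a + b) / (a * (b - 2))) + 2 := by
  have hb2 : 0 < b - 2 := by linarith
  have hb4 : 0 < b - 4 := by linarith
  have hab : 0 < a + b - 2 := by linarith
  set x := 2 * (a + b) / (a * (b - 2)) with hx
  set y := 2 * (a + b - 2) / (a * (b - 4)) with hy
  have hbx : (b - 2) * √x = √((b - 2) ^ 2 * x) := by rw [sqrt_mul (sq_nonneg _), sqrt_sq hb2.le]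
  have hby : b * √y = √(b ^ 2 * y) := by rw [sqrt_mul (sq_nonneg _), sqrt_sq (by linarith)]
  have hgap : b ^ 2 * y - (b - 2) ^ 2 * x - 2 ^ 2 = 8 * b * (a + b - 2) / (a * (b - 4)) := by
    rw [hx, hy]; field_simp; ring
  have hgap_nonneg : 0 ≤ 8 * b * (a + b - 2) / (a * (b - 4)) := by positivity
  rw [hbx, hby, sqrt_lt_sqrt_add_iff (by positivity) two_pos (by linarith), hgap, hx,
    div_pow, div_lt_iff₀ (by positivity)]
  field_simp
  constructor <;> intro h <;> nlinarith

theorem poly_iff_D_pos_and_C_lt_D (d1 d2 : ℕ) (hd1 : 3 ≤ d1) (hd2 : 5 ≤ d2) :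
    (d1 : ℝ) * ((d2 : ℝ) - 2) * ((d1 : ℝ) + d2) * ((d2 : ℝ) - 4) ^ 2 >
        2 * (d2 : ℝ) ^ 2 * ((d1 : ℝ) + d2 - 2) ^ 2 ↔
      Real.sqrt (2 * ((d1 : ℝ) + d2 - 2) / (d1 * ((d2 : ℝ) - 4))) < 1 ∧
        Cval d1 d2 < Dval d1 d2 := by
  have ha : (3 : ℝ) ≤ d1 := by exact_mod_cast hd1
  have hb : (5 : ℝ) ≤ d2 := by exact_mod_cast hd2
  set a : ℝ := (d1 : ℝ)
  set b : ℝ := (d2 : ℝ)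
  set s := √(2 * (a + b) / (a * (b - 2)))
  set t := √(2 * (a + b - 2) / (a * (b - 4)))
  have hst : s ≤ t := sqrt_le_sqrt <| by
    rw [div_le_div_iff₀ (by nlinarith) (by nlinarith)]
    nlinarith
  have hCD (ht : t < 1) : Cval d1 d2 < Dval d1 d2 ↔ b * t < (b - 2) * s + 2 :=
    (div_add_mul_inv_lt_div_add_mul_inv_iff (by linarith) (by linarith) (by linarith)
      (hst.trans_lt ht) ht).trans (by constructor <;> intro h <;> linarith)
  rw [gt_iff_lt, poly_lt_iff_mul_sqrt_lt a b (by linarith) (by linarith)]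
  constructor
  · intro h
    have ht : t < 1 := by
      have := mul_le_mul_of_nonneg_left hst (by linarith : 0 ≤ b - 2)
      linarith
    exact ⟨ht, (hCD ht).mpr h⟩
  · rintro ⟨ht, hC⟩
    exact (hCD ht).mp hC
end

section
/- For every integer d2 ≥ 25, one has (d2 + 2)·C(3,d2) > d2·D(3,d2). -/
set_option maxHeartbeats 1000000 in
theorem C_mul_gt_D_mul_d1_eq_three (d2 : ℕ) (hd2 : 25 ≤ d2) :
    ((d2 : ℝ) + 2) * Cval 3 d2 > (d2 : ℝ) * Dval 3 d2 := by
  have hx : (25:ℝ) ≤ (d2:ℝ) := by exact_mod_cast hd2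
  obtain ⟨x, hxdef⟩ : ∃ x : ℝ, (d2:ℝ) = x := ⟨_, rfl⟩
  rw [Cval, Dval, hxdef]
  push_cast [hxdef]
  have h2p : (0:ℝ) < x - 2 := by linarith
  have h4p : (0:ℝ) < x - 4 := by linarith
  set a : ℝ := Real.sqrt (2 * (3 + x) / (3 * (x - 2))) with hadef
  set b : ℝ := Real.sqrt (2 * (3 + x - 2) / (3 * (x - 4))) with hbdef
  have hargA : (0:ℝ) ≤ 2 * (3 + x) / (3 * (x - 2)) := by
    apply div_nonneg <;> linarith
  have hargB : (0:ℝ) ≤ 2 * (3 + x - 2) / (3 * (x - 4)) := by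
    apply div_nonneg <;> linarith
  have ha0 : 0 ≤ a := Real.sqrt_nonneg _
  have hb0 : 0 ≤ b := Real.sqrt_nonneg _
  have hne2 : (3:ℝ) * (x - 2) ≠ 0 := by positivity
  have hne4 : (3:ℝ) * (x - 4) ≠ 0 := by positivity
  have ha2' : a ^ 2 * (3 * (x - 2)) = 2 * (3 + x) := by
    rw [hadef, Real.sq_sqrt hargA, div_mul_cancel₀ _ hne2]
  have hb2' : b ^ 2 * (3 * (x - 4)) = 2 * (3 + x - 2) := by
    rw [hbdef, Real.sq_sqrt hargB, div_mul_cancel₀ _ hne4]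
  have ha1 : a < 1 := by
    rw [hadef, show (1:ℝ) = Real.sqrt 1 by simp]
    apply Real.sqrt_lt_sqrt hargA
    rw [div_lt_one (by linarith)]; linarith
  have hb1 : b < 1 := by
    rw [hbdef, show (1:ℝ) = Real.sqrt 1 by simp]
    apply Real.sqrt_lt_sqrt hargB
    rw [div_lt_one (by linarith)]; linarith
  have h1a : (0:ℝ) < 1 - a := by linarith
  have h1b : (0:ℝ) < 1 - b := by linarith
  have hab : a < b := by
    rw [hadef, hbdef]
    apply Real.sqrt_lt_sqrt hargA
    rw [div_lt_div_iff₀ (by linarith) (by linarith)]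
    nlinarith
  have hd : (b ^ 2 - a ^ 2) * (3 * (x - 2) * (3 * (x - 4))) = 60 := by
    linear_combination (3 * (x - 2)) * hb2' - (3 * (x - 4)) * ha2'
  have hx2 : (0:ℝ) < x ^ 2 := by nlinarith
  have h2' : (b ^ 2 - a ^ 2) * x ^ 2 > 20 / 3 := by
    nlinarith [hd, mul_pos h2p h4p, mul_pos (mul_pos h2p h4p) hx2]
  have h1 : (b - a) * 2 > b ^ 2 - a ^ 2 := by
    nlinarith [mul_pos (sub_pos.2 hab) (show (0:ℝ) < 2 - (a + b) by linarith)]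
  have h3 : x ^ 2 * (b - a) > 10 / 3 := by
    nlinarith [h2', mul_pos (sub_pos.2 (show b ^ 2 - a ^ 2 < (b - a) * 2 from h1)) hx2]
  have ha6 : (1:ℝ) / 6 ≤ a := by
    rw [hadef, show (1:ℝ)/6 = Real.sqrt ((1/6)^2) by
      rw [Real.sqrt_sq (by norm_num)]]
    apply Real.sqrt_le_sqrt
    rw [le_div_iff₀ (by linarith)]; nlinarith
  have key : (x ^ 2 - 4) * a + 4 < x ^ 2 * b := by nlinarith [h3, ha6]
  have hP : 3 + x * (1 - a)⁻¹ = (3 * (1 - a) + x) / (1 - a) := by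
    field_simp
  have hQ : 3 + (x - 2) * (1 - b)⁻¹ = (3 * (1 - b) + (x - 2)) / (1 - b) := by
    field_simp
  rw [hP, hQ, div_div_eq_mul_div, div_div_eq_mul_div]
  have hPpos : 0 < 3 * (1 - a) + x := by linarith
  have hQpos : 0 < 3 * (1 - b) + (x - 2) := by linarith
  rw [gt_iff_lt, mul_div_assoc', mul_div_assoc', div_lt_div_iff₀ hQpos hPpos]
  nlinarith [key, mul_pos h1a h1b]
end
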